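/- arXiv:1905.08842 — 3 statements merged into one kernel-verified Lean document; each statement's English description precedes it below -/
import Mathlib

section
/- If S is a set of propositional clauses and S' is a minimal unsatisfiable subset of S with |S'| = n, then any two distinct clauses of S' are joined by an alternating path in S' of length at most 2n − 2. -/
/-- A propositional literal: an atom together with a Boolean sign. -/
abbrev Lit (α : Type) := α × Bool

/-- A propositional clause: a finite set of literals. -/
abbrev Clause (α : Type) := Finset (α × Bool)

/-- The complement of a literal flips its sign. -/
def Lit.compl {α : Type} (L : Lit α) : Lit α := (L.1, !L.2)

/-- A valuation satisfies a literal `(a, s)` iff `v a = s`. -/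
def SatLit {α : Type} (v : α → Bool) (L : Lit α) : Prop := v L.1 = L.2

/-- A valuation satisfies a clause iff it satisfies some literal of it. -/
def SatClause {α : Type} (v : α → Bool) (C : Clause α) : Prop := ∃ L ∈ C, SatLit v L

/-- A valuation satisfies a set of clauses iff it satisfies every clause in it. -/
def SatSet {α : Type} (v : α → Bool) (S : Set (Clause α)) : Prop := ∀ C ∈ S, SatClause v C

/-- A set of clauses is satisfiable if some valuation satisfies it. -/
def Satisfiable {α : Type} (S : Set (Clause α)) : Prop := ∃ v, SatSet v S

/-- `IsAltPath S Cs ps` : the sequence of clauses `Cs` together with the list of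
linking literal pairs `ps` is an alternating path in `S`.  The path
`C₁,(L₁,M₂),C₂,…,(Lₙ₋₁,Mₙ),Cₙ` is encoded with `Cs = [C₁,…,Cₙ]` and
`ps = [(L₁,M₂),…,(Lₙ₋₁,Mₙ)]`. -/
def IsAltPath {α : Type} [DecidableEq α] (S : Set (Clause α))
    (Cs : List (Clause α)) (ps : List (Lit α × Lit α)) : Prop :=
  Cs ≠ [] ∧ ps.length + 1 = Cs.length ∧
  (∀ C ∈ Cs, C ∈ S) ∧
  (∀ i, ∀ h : i < ps.length,
    (ps.get ⟨i, h⟩).1 ∈ Cs.getD i ∅ ∧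
    (ps.get ⟨i, h⟩).2 ∈ Cs.getD (i + 1) ∅ ∧
    (ps.get ⟨i, h⟩).2 = Lit.compl (ps.get ⟨i, h⟩).1) ∧
  (∀ i, ∀ h : i + 1 < ps.length,
    (ps.get ⟨i + 1, h⟩).1 ≠ (ps.get ⟨i, Nat.lt_of_succ_lt h⟩).2)

/-- There is an alternating path in `S` from `C` to `D` of length `n`
(length counts the clauses). -/
def AltPathFromTo {α : Type} [DecidableEq α] (S : Set (Clause α))
    (C D : Clause α) (n : ℕ) : Prop :=
  ∃ Cs ps, IsAltPath S Cs ps ∧ Cs.head? = some C ∧ Cs.getLast? = some D ∧ Cs.length = n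

/-- The relevance distance `d_S(C, D)`: the minimum length of an alternating path
in `S` from `C` to `D`, or `∞` if there is none. -/
noncomputable def relDist {α : Type} [DecidableEq α] (S : Set (Clause α))
    (C D : Clause α) : ℕ∞ :=
  ⨅ n ∈ {n : ℕ | AltPathFromTo S C D n}, (n : ℕ∞)

/-- `d_S(T, C) = min {d_S(D, C) : D ∈ T}`. -/
noncomputable def relDistFrom {α : Type} [DecidableEq α] (S T : Set (Clause α))
    (C : Clause α) : ℕ∞ :=
  ⨅ D ∈ T, relDist S D C

/-- `R_{n,S}(T) = {C ∈ S : d_S(T, C) ≤ n}`. -/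
def RelSet {α : Type} [DecidableEq α] (n : ℕ) (S T : Set (Clause α)) : Set (Clause α) :=
  {C ∈ S | relDistFrom S T C ≤ (n : ℕ∞)}

/-- A set of clauses is relevance connected if between any two of its clauses
there is an alternating path in it. -/
def RelevanceConnected {α : Type} [DecidableEq α] (S : Set (Clause α)) : Prop :=
  ∀ C ∈ S, ∀ D ∈ S, ∃ n, AltPathFromTo S C D n

/-- A set of clauses is minimal unsatisfiable if it is unsatisfiable and every
proper subset of it is satisfiable. -/
def MinimalUnsat {α : Type} (S : Set (Clause α)) : Prop :=
  ¬ Satisfiable S ∧ ∀ T ⊂ S, Satisfiable T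

/-- `S'` is a support set for `S`: `S' ⊆ S` and every unsatisfiable subset of `S`
meets `S'`. -/
def IsSupport {α : Type} (S S' : Set (Clause α)) : Prop :=
  S' ⊆ S ∧ ∀ T ⊆ S, ¬ Satisfiable T → (T ∩ S').Nonempty

/-- `D` is a resolvent of `C₁` and `C₂` upon literal `L`. -/
def IsResolvent {α : Type} [DecidableEq α] (D C₁ C₂ : Clause α) (L : Lit α) : Prop :=
  L ∈ C₁ ∧ Lit.compl L ∈ C₂ ∧ D = (C₁.erase L) ∪ (C₂.erase (Lit.compl L))

/-- `Cs` is a resolution sequence from `S`: every clause is an input clause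
(member of `S`) or a resolvent of two earlier clauses. -/
def IsResolutionSeq {α : Type} [DecidableEq α] (S : Set (Clause α))
    (Cs : List (Clause α)) : Prop :=
  ∀ i, ∀ h : i < Cs.length,
    Cs.get ⟨i, h⟩ ∈ S ∨
    ∃ j k L, j < i ∧ k < i ∧ IsResolvent (Cs.get ⟨i, h⟩) (Cs.getD j ∅) (Cs.getD k ∅) L

/-- `Cs` is a resolution refutation of length `n` from `S`: a resolution sequence
of `n` clauses ending in the empty clause. -/
def IsRefutation {α : Type} [DecidableEq α] (S : Set (Clause α))
    (Cs : List (Clause α)) (n : ℕ) : Prop :=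
  IsResolutionSeq S Cs ∧ Cs.length = n ∧ Cs.getLast? = some (∅ : Clause α)

/-!
A minimal unsatisfiable set `S` is relevance connected. Fix `C ∈ S` and let `G` be the set of
literals through which an alternating path from `C` can leave its last clause: `G` contains `C`
and is closed under entering a clause through the complement of one of its literals. If some
`D ≠ C` contained no complement of a literal of `G`, then the clauses reached from `C` would form
a proper, hence satisfiable, subset of `S`; reading its model on the atoms of the literals of `G`
falsified by a model of `S \ {C}`, and the latter model elsewhere, would satisfy all of `S`.

For the bound take a shortest alternating path from `C` to `D`. Cutting out the part between two
visits of one clause leaves an alternating path unless the path leaves the later visit through the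
literal by which it entered the earlier one. So `C` and `D` are visited once each and no other
clause three times, and the path has at most `2 + 2 (n - 2)` clauses.
-/

theorem Finset.card_le_two_of_forall_lt_lt {β : Type*} [LinearOrder β] {s : Finset β}
    (h : ∀ a ∈ s, ∀ b ∈ s, ∀ c ∈ s, a < b → b < c → False) : s.card ≤ 2 := by
  by_contra! hs
  let f := s.orderEmbOfFin rfl
  exact h (f ⟨0, by omega⟩) (s.orderEmbOfFin_mem rfl _) (f ⟨1, hs.trans' one_lt_two⟩)
    (s.orderEmbOfFin_mem rfl _) (f ⟨2, hs⟩) (s.orderEmbOfFin_mem rfl _)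
    (f.strictMono (by simp [Fin.lt_def])) (f.strictMono (by simp [Fin.lt_def]))

section

variable {α : Type}

@[simp]
theorem Lit.compl_compl (L : Lit α) : L.compl.compl = L := by
  simp [Lit.compl]

theorem satLit_compl {v : α → Bool} {L : Lit α} : SatLit v L.compl ↔ ¬ SatLit v L := by
  simp [SatLit, Lit.compl, Bool.eq_not_iff]

theorem Lit.eq_or_eq_compl_of_fst_eq {K L : Lit α} (h : K.1 = L.1) : K = L ∨ K = L.compl := by
  obtain ⟨a, s⟩ := K
  obtain ⟨b, t⟩ := L
  cases s <;> cases t <;> simp_all [Lit.compl]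

theorem MinimalUnsat.exists_compl_mem_of_closed {S : Set (Clause α)} (hS : MinimalUnsat S)
    {C : Clause α} (hC : C ∈ S) {G : Set (Lit α)} (hCG : ∀ L ∈ C, L ∈ G)
    (hG : ∀ F ∈ S, ∀ g ∈ G, g.compl ∈ F → ∀ K ∈ F, K ≠ g.compl → K ∈ G)
    {D : Clause α} (hD : D ∈ S) (hDC : D ≠ C) : ∃ g ∈ G, g.compl ∈ D := by
  classical
  by_contra hDG
  set T : Set (Clause α) := {F ∈ S | F = C ∨ ∃ g ∈ G, g.compl ∈ F}
  obtain ⟨w, hw⟩ := hS.2 T ⟨fun F hF => hF.1, fun h => hDG ((h hD).2.resolve_left hDC)⟩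
  obtain ⟨v, hv⟩ := hS.2 (S \ {C}) ⟨Set.sdiff_subset, fun h => (h hC).2 rfl⟩
  have hvC : ¬ SatClause v C := fun hvC =>
    hS.1 ⟨v, fun F hF => if h : F = C then h ▸ hvC else hv F ⟨hF, h⟩⟩
  let switched (a : α) : Prop := ∃ g ∈ G, g.1 = a ∧ ¬ SatLit v g
  let u (a : α) : Bool := if switched a then w a else v a
  have sat_of_switched : ∀ F, ∀ K ∈ F, SatLit w K → switched K.1 → SatClause u F :=
    fun F K hK hwK hK1 => ⟨K, hK, by simp only [SatLit, u, if_pos hK1]; exact hwK⟩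
  have sat_of_not_switched : ∀ F, ∀ K ∈ F, SatLit v K → ¬ switched K.1 → SatClause u F :=
    fun F K hK hvK hK1 => ⟨K, hK, by simp only [SatLit, u, if_neg hK1]; exact hvK⟩
  refine hS.1 ⟨u, fun F hF => ?_⟩
  by_cases hFC : F = C
  · subst hFC
    obtain ⟨K, hK, hwK⟩ := hw F ⟨hC, Or.inl rfl⟩
    exact sat_of_switched F K hK hwK ⟨K, hCG K hK, rfl, fun hvK => hvC ⟨K, hK, hvK⟩⟩
  obtain ⟨K, hK, hvK⟩ := hv F ⟨hF, hFC⟩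
  by_cases hsK : ¬ switched K.1
  · exact sat_of_not_switched F K hK hvK hsK
  obtain ⟨g, hg, hgK, hvg⟩ := not_not.1 hsK
  have hKc : Lit.compl K ∈ G := by
    rcases Lit.eq_or_eq_compl_of_fst_eq hgK with rfl | rfl
    · exact absurd hvK hvg
    · exact hg
  have hFG : ∀ L ∈ F, L ≠ K → L ∈ G := by
    simpa using hG F hF (Lit.compl K) hKc (by simpa using hK)
  obtain ⟨L, hL, hwL⟩ := hw F ⟨hF, Or.inr ⟨Lit.compl K, hKc, by simpa using hK⟩⟩
  by_cases hsL : switched L.1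
  · exact sat_of_switched F L hL hwL hsL
  have hLK : L ≠ K := by
    rintro rfl
    exact hsL ⟨Lit.compl L, hKc, rfl, satLit_compl.not.2 (not_not.2 hvK)⟩
  exact sat_of_not_switched F L hL (by_contra fun hvL => hsL ⟨L, hFG L hL hLK, rfl, hvL⟩) hsL

end

section

variable {α : Type} [DecidableEq α] {S : Set (Clause α)}

theorem IsAltPath.length_eq {Cs : List (Clause α)} {ps : List (Lit α × Lit α)}
    (h : IsAltPath S Cs ps) : Cs.length = ps.length + 1 :=
  h.2.1.symm

theorem isAltPath_singleton_iff {C : Clause α} : IsAltPath S [C] [] ↔ C ∈ S := by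
  simp [IsAltPath]

theorem isAltPath_cons_cons_iff {C C' : Clause α} {Cs : List (Clause α)}
    {p : Lit α × Lit α} {ps : List (Lit α × Lit α)} :
    IsAltPath S (C :: C' :: Cs) (p :: ps) ↔
      C ∈ S ∧ p.1 ∈ C ∧ p.2 ∈ C' ∧ p.2 = p.1.compl ∧ (∀ q ∈ ps.head?, q.1 ≠ p.2) ∧
        IsAltPath S (C' :: Cs) ps := by
  simp only [IsAltPath, ne_eq, reduceCtorEq, not_false_eq_true, List.length_cons,
    add_left_inj, List.mem_cons, forall_eq_or_imp, true_and, List.get_eq_getElem]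
  constructor
  · rintro ⟨hlen, ⟨hC, hC', hCs⟩, hpair, halt⟩
    refine ⟨hC, (hpair 0 (by simp)).1, (hpair 0 (by simp)).2.1, (hpair 0 (by simp)).2.2, ?_,
      hlen, ⟨hC', hCs⟩, fun i hi => hpair (i + 1) (by omega), fun i hi => halt (i + 1) (by omega)⟩
    rcases ps with _ | ⟨q, ps⟩
    · simp
    · simpa using halt 0 (by simp)
  · rintro ⟨hC, hp1, hp2, hpc, hhead, hlen, ⟨hC', hCs⟩, hpair, halt⟩
    refine ⟨hlen, ⟨hC, hC', hCs⟩, ?_, ?_⟩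
    · rintro (_ | i) hi
      · exact ⟨hp1, hp2, hpc⟩
      · exact hpair i (by simpa using hi)
    · rintro (_ | i) hi
      · rcases ps with _ | ⟨q, ps⟩
        · simp at hi
        · simpa using hhead
      · exact halt i (by simpa using hi)

theorem IsAltPath.turn_ne {Cs : List (Clause α)} {ps : List (Lit α × Lit α)}
    (h : IsAltPath S Cs ps) (i : ℕ) : ∀ p ∈ ps[i]?, ∀ q ∈ ps[i + 1]?, q.1 ≠ p.2 := by
  intro p hp q hq
  obtain ⟨hi, rfl⟩ := List.getElem?_eq_some_iff.1 hq
  obtain ⟨-, rfl⟩ := List.getElem?_eq_some_iff.1 hp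
  exact h.2.2.2.2 i hi

theorem IsAltPath.exists_eq_cons_cons {Cs : List (Clause α)} {p : Lit α × Lit α}
    {ps : List (Lit α × Lit α)} (h : IsAltPath S Cs (p :: ps)) :
    ∃ C C' Cs', Cs = C :: C' :: Cs' := by
  match Cs, h.length_eq with
  | C :: C' :: Cs', _ => exact ⟨C, C', Cs', rfl⟩

theorem IsAltPath.append {Cs₁ Cs₂ : List (Clause α)} {ps₁ ps₂ : List (Lit α × Lit α)}
    (h₁ : IsAltPath S Cs₁ ps₁) (h₂ : IsAltPath S Cs₂ ps₂) (hjoin : Cs₁.getLast? = Cs₂.head?)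
    (hturn : ∀ p ∈ ps₁.getLast?, ∀ q ∈ ps₂.head?, q.1 ≠ p.2) :
    IsAltPath S (Cs₁ ++ Cs₂.tail) (ps₁ ++ ps₂) := by
  induction ps₁ generalizing Cs₁ with
  | nil =>
    obtain ⟨C, rfl⟩ := List.length_eq_one_iff.1 h₁.length_eq
    obtain ⟨D, Ds, rfl⟩ := List.exists_cons_of_ne_nil h₂.1
    simp only [List.getLast?_singleton, List.head?_cons, Option.some.injEq] at hjoin
    simpa [hjoin] using h₂
  | cons p ps₁ ih =>
    obtain ⟨C, C', Cs, rfl⟩ := h₁.exists_eq_cons_cons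
    rw [isAltPath_cons_cons_iff] at h₁
    obtain ⟨hC, hp1, hp2, hpc, hhead, h₁⟩ := h₁
    rw [List.cons_append, List.cons_append, List.cons_append, isAltPath_cons_cons_iff,
      ← List.cons_append]
    refine ⟨hC, hp1, hp2, hpc, ?_, ih h₁ (by simpa using hjoin) fun p' hp' => hturn p' ?_⟩
    · rcases ps₁ with _ | ⟨q, ps₁⟩
      · simpa using hturn p (by simp)
      · simpa using hhead
    · rcases ps₁ with _ | ⟨q, ps₁⟩
      · simp at hp'
      · simpa [List.getLast?_cons] using hp'

theorem IsAltPath.take {Cs : List (Clause α)} {ps : List (Lit α × Lit α)}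
    (h : IsAltPath S Cs ps) {k : ℕ} (hk : k ≤ ps.length) :
    IsAltPath S (Cs.take (k + 1)) (ps.take k) := by
  induction k generalizing Cs ps with
  | zero =>
    obtain ⟨C, Cs, rfl⟩ := List.exists_cons_of_ne_nil h.1
    simpa [isAltPath_singleton_iff] using h.2.2.1 C (by simp)
  | succ k ih =>
    obtain ⟨p, ps, rfl⟩ := List.exists_cons_of_length_pos (by omega : 0 < ps.length)
    obtain ⟨C, C', Cs, rfl⟩ := h.exists_eq_cons_cons
    rw [isAltPath_cons_cons_iff] at h
    obtain ⟨hC, hp1, hp2, hpc, hhead, h⟩ := h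
    rw [List.take_succ_cons, List.take_succ_cons, List.take_succ_cons, isAltPath_cons_cons_iff,
      ← List.take_succ_cons]
    refine ⟨hC, hp1, hp2, hpc, fun q hq => hhead q ?_, ih h (by simpa using hk)⟩
    rcases k with _ | k
    · simp at hq
    · rcases ps with _ | ⟨q', ps⟩ <;> simp_all

theorem IsAltPath.drop {Cs : List (Clause α)} {ps : List (Lit α × Lit α)}
    (h : IsAltPath S Cs ps) {k : ℕ} (hk : k ≤ ps.length) :
    IsAltPath S (Cs.drop k) (ps.drop k) := by
  induction k generalizing Cs ps with
  | zero => simpa using h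
  | succ k ih =>
    obtain ⟨p, ps, rfl⟩ := List.exists_cons_of_length_pos (by omega : 0 < ps.length)
    obtain ⟨C, C', Cs, rfl⟩ := h.exists_eq_cons_cons
    exact ih (isAltPath_cons_cons_iff.1 h).2.2.2.2.2 (by simpa using hk)

theorem IsAltPath.splice {Cs : List (Clause α)} {ps : List (Lit α × Lit α)}
    (h : IsAltPath S Cs ps) {i j : ℕ} (hij : i ≤ j) (hj : j ≤ ps.length)
    (hCs : Cs[i]? = Cs[j]?) (hturn : ∀ p ∈ (ps.take i).getLast?, ∀ q ∈ ps[j]?, q.1 ≠ p.2) :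
    IsAltPath S (Cs.take (i + 1) ++ Cs.drop (j + 1)) (ps.take i ++ ps.drop j) := by
  have hlen := h.length_eq
  have := (h.take (k := i) (by omega)).append (h.drop hj) ?_ (by simpa using hturn)
  · simpa [List.tail_drop] using this
  · rw [List.getLast?_take, List.head?_drop, if_neg (by omega), Nat.add_sub_cancel, ← hCs,
      List.getElem?_eq_getElem (by omega : i < Cs.length), Option.some_or]

/-- `g` can leave the last clause `E` of an alternating path from `C`: `g ∈ E` and `g` is not the
literal through which the path entered `E`. -/
def IsAltExit (S : Set (Clause α)) (C : Clause α) (g : Lit α) : Prop :=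
  ∃ Cs ps E, IsAltPath S Cs ps ∧ Cs.head? = some C ∧ Cs.getLast? = some E ∧ g ∈ E ∧
    ∀ p ∈ ps.getLast?, p.2 ≠ g

theorem isAltExit_of_mem {C : Clause α} (hC : C ∈ S) {g : Lit α} (hg : g ∈ C) :
    IsAltExit S C g :=
  ⟨[C], [], C, isAltPath_singleton_iff.2 hC, rfl, rfl, hg, by simp⟩

namespace IsAltExit

variable {C : Clause α} {g : Lit α}

theorem exists_isAltPath (h : IsAltExit S C g) {F : Clause α} (hF : F ∈ S) (hgF : g.compl ∈ F) :
    ∃ Cs ps, IsAltPath S Cs ps ∧ Cs.head? = some C ∧ Cs.getLast? = some F ∧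
      ps.getLast? = some (g, g.compl) := by
  obtain ⟨Cs, ps, E, hp, hhead, hlast, hgE, hturn⟩ := h
  have hstep : IsAltPath S [E, F] [(g, g.compl)] :=
    isAltPath_cons_cons_iff.2 ⟨hp.2.2.1 E (List.mem_of_mem_getLast? hlast), hgE, hgF, rfl,
      by simp, isAltPath_singleton_iff.2 hF⟩
  refine ⟨Cs ++ [F], ps ++ [(g, g.compl)],
    hp.append hstep (by simpa using hlast) (by simpa using fun p hp => (hturn p hp).symm), ?_,
    by simp, by simp⟩
  obtain ⟨C', Cs', rfl⟩ := List.exists_cons_of_ne_nil hp.1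
  simpa using hhead

theorem altPathFromTo (h : IsAltExit S C g) {F : Clause α} (hF : F ∈ S) (hgF : g.compl ∈ F) :
    ∃ m, AltPathFromTo S C F m := by
  obtain ⟨Cs, ps, hp, hhead, hlast, -⟩ := h.exists_isAltPath hF hgF
  exact ⟨_, Cs, ps, hp, hhead, hlast, rfl⟩

theorem of_compl_mem (h : IsAltExit S C g) {F : Clause α} (hF : F ∈ S) (hgF : g.compl ∈ F)
    {K : Lit α} (hK : K ∈ F) (hKg : K ≠ g.compl) : IsAltExit S C K := by
  obtain ⟨Cs, ps, hp, hhead, hlast, hps⟩ := h.exists_isAltPath hF hgF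
  exact ⟨Cs, ps, F, hp, hhead, hlast, hK, by simpa [hps] using hKg.symm⟩

end IsAltExit

theorem MinimalUnsat.relevanceConnected (hS : MinimalUnsat S) : RelevanceConnected S := by
  intro C hC D hD
  by_cases hDC : D = C
  · subst hDC
    exact ⟨1, [D], [], isAltPath_singleton_iff.2 hC, rfl, rfl, rfl⟩
  obtain ⟨g, hg, hgD⟩ := hS.exists_compl_mem_of_closed hC (G := {g | IsAltExit S C g})
    (fun _ => isAltExit_of_mem hC) (fun _ hF _ hg hgF _ hK hKg => hg.of_compl_mem hF hgF hK hKg)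
    hD hDC
  exact hg.altPathFromTo hD hgD

def IsShortestAltPath (S : Set (Clause α)) (Cs : List (Clause α))
    (ps : List (Lit α × Lit α)) : Prop :=
  IsAltPath S Cs ps ∧ ∀ Cs' ps', IsAltPath S Cs' ps' → Cs'.head? = Cs.head? →
    Cs'.getLast? = Cs.getLast? → Cs.length ≤ Cs'.length

namespace IsShortestAltPath

variable {Cs : List (Clause α)} {ps : List (Lit α × Lit α)}

theorem turn_eq (h : IsShortestAltPath S Cs ps) {i j : ℕ} (hij : i < j) (hj : j ≤ ps.length)
    (hCs : Cs[i]? = Cs[j]?) : ∃ p ∈ (ps.take i).getLast?, ∃ q ∈ ps[j]?, q.1 = p.2 := by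
  by_contra! hturn
  have hlen := h.1.length_eq
  have hshort := h.2 _ _ (h.1.splice hij.le hj hCs hturn) ?_ ?_
  · simp only [List.length_append, List.length_take, List.length_drop] at hshort
    omega
  · rw [List.head?_append, List.head?_take, if_neg (Nat.succ_ne_zero i), List.head?_eq_getElem?,
      List.getElem?_eq_getElem (by omega : 0 < Cs.length), Option.some_or]
  · rw [List.getLast?_append, List.getLast?_drop, List.getLast?_take, if_neg (Nat.succ_ne_zero i),
      Nat.add_sub_cancel, List.getElem?_eq_getElem (by omega : i < Cs.length), Option.some_or,
      List.getLast?_eq_getElem?]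
    split_ifs with hlast
    · rw [Option.none_or, ← List.getElem?_eq_getElem, hCs]
      congr 1
      omega
    · rw [List.getElem?_eq_getElem (by omega), Option.some_or]

theorem getElem?_ne_head? (h : IsShortestAltPath S Cs ps) {j : ℕ} (hj0 : 0 < j)
    (hj : j ≤ ps.length) : Cs[j]? ≠ Cs.head? := by
  intro hCs
  obtain ⟨p, hp, -⟩ := h.turn_eq hj0 hj (by rw [hCs, List.head?_eq_getElem?])
  simp at hp

theorem getElem?_ne_getLast? (h : IsShortestAltPath S Cs ps) {i : ℕ} (hi : i < ps.length) :
    Cs[i]? ≠ Cs.getLast? := by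
  intro hCs
  obtain ⟨-, -, q, hq, -⟩ := h.turn_eq hi le_rfl
    (by rw [hCs, List.getLast?_eq_getElem?, h.1.length_eq, Nat.add_sub_cancel])
  simp at hq

/-- If a clause is visited at `i < j < k`, the path must leave it at `j` and at `k` through the
literal by which it entered at `i`, and leave it at `k` through the literal by which it entered
at `j`; so it enters and leaves at `j` through the same literal, which alternation forbids. -/
theorem not_three_visits (h : IsShortestAltPath S Cs ps) {i j k : ℕ} (hij : i < j)
    (hjk : j < k) (hk : k ≤ ps.length) (hCij : Cs[i]? = Cs[j]?) (hCjk : Cs[j]? = Cs[k]?) :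
    False := by
  obtain ⟨p, hp, q, hq, hqp⟩ := h.turn_eq hij (by omega) hCij
  obtain ⟨p', hp', r, hr, hrp'⟩ := h.turn_eq (hij.trans hjk) hk (hCij.trans hCjk)
  obtain ⟨p'', hp'', r', hr', hrp''⟩ := h.turn_eq hjk hk hCjk
  obtain rfl : p' = p := Option.some_injective _ (hp'.symm.trans hp)
  obtain rfl : r' = r := Option.some_injective _ (hr'.symm.trans hr)
  have hj : ps[j - 1 + 1]? = some q := by rwa [Nat.sub_add_cancel (by omega)]
  rw [List.getLast?_take, if_neg (by omega),
    List.getElem?_eq_getElem (by omega : j - 1 < ps.length), Option.some_or,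
    ← List.getElem?_eq_getElem] at hp''
  exact h.1.turn_ne (j - 1) p'' hp'' q hj (by rw [hqp, ← hrp', hrp''])

end IsShortestAltPath

theorem AltPathFromTo.exists_isShortestAltPath {C D : Clause α} {m : ℕ}
    (h : AltPathFromTo S C D m) :
    ∃ Cs ps, IsShortestAltPath S Cs ps ∧ Cs.head? = some C ∧ Cs.getLast? = some D := by
  classical
  have hex : ∃ m, AltPathFromTo S C D m := ⟨m, h⟩
  obtain ⟨Cs, ps, hp, hhead, hlast, hlen⟩ := Nat.find_spec hex
  refine ⟨Cs, ps, ⟨hp, fun Cs' ps' hp' hhead' hlast' => ?_⟩, hhead, hlast⟩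
  rw [hlen]
  exact Nat.find_min' hex ⟨Cs', ps', hp', hhead'.trans hhead, hlast'.trans hlast, rfl⟩

theorem IsShortestAltPath.length_le {S' : Finset (Clause α)} {Cs : List (Clause α)}
    {ps : List (Lit α × Lit α)} (h : IsShortestAltPath ↑S' Cs ps) {C D : Clause α}
    (hC : Cs.head? = some C) (hD : Cs.getLast? = some D) (hCD : C ≠ D) :
    Cs.length ≤ 2 * S'.card - 2 := by
  have hlen := h.1.length_eq
  have hmem : ∀ i (hi : i < Cs.length), Cs[i] ∈ S' := fun i hi =>
    h.1.2.2.1 _ (List.getElem_mem hi)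
  have hCS : C ∈ S' := h.1.2.2.1 C (List.mem_of_mem_head? hC)
  have hDS : D ∈ S' := h.1.2.2.1 D (List.mem_of_mem_getLast? hD)
  have hps : 0 < ps.length := by
    by_contra! h0
    rw [List.head?_eq_getElem?] at hC
    rw [List.getLast?_eq_getElem?, hlen, (by omega : ps.length = 0)] at hD
    exact hCD (Option.some_injective _ (hC.symm.trans hD))
  have hinterior : ∀ i ∈ Finset.Ico 1 ps.length, Cs.getD i ∅ ∈ (S'.erase C).erase D := by
    intro i hi
    rw [Finset.mem_Ico] at hi
    rw [List.getD_eq_getElem?_getD, List.getElem?_eq_getElem (by omega), Option.getD_some]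
    refine Finset.mem_erase.2 ⟨fun hiD => ?_, Finset.mem_erase.2 ⟨fun hiC => ?_, hmem i _⟩⟩
    · exact h.getElem?_ne_getLast? hi.2 (by rw [hD, List.getElem?_eq_getElem (by omega), hiD])
    · exact h.getElem?_ne_head? (by omega) hi.2.le
        (by rw [hC, List.getElem?_eq_getElem (by omega), hiC])
  have hfiber : ∀ F ∈ (S'.erase C).erase D,
      ({i ∈ Finset.Ico 1 ps.length | Cs.getD i ∅ = F} : Finset ℕ).card ≤ 2 := by
    intro F _
    refine Finset.card_le_two_of_forall_lt_lt fun a ha b hb c hc hab hbc => ?_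
    simp only [Finset.mem_filter, Finset.mem_Ico, List.getD_eq_getElem?_getD] at ha hb hc
    have hget : ∀ i < Cs.length, Cs[i]?.getD ∅ = F → Cs[i]? = some F := fun i hi hF => by
      rw [List.getElem?_eq_getElem hi] at hF ⊢
      rw [Option.getD_some] at hF
      rw [hF]
    exact h.not_three_visits hab hbc hc.1.2.le
      ((hget a (by omega) ha.2).trans (hget b (by omega) hb.2).symm)
      ((hget b (by omega) hb.2).trans (hget c (by omega) hc.2).symm)
  have hcount := Finset.card_le_mul_card_image_of_maps_to hinterior 2 hfiber
  rw [Nat.card_Ico, Finset.card_erase_of_mem (Finset.mem_erase.2 ⟨hCD.symm, hDS⟩),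
    Finset.card_erase_of_mem hCS] at hcount
  have hcard : 1 < S'.card := Finset.one_lt_card.2 ⟨C, hCS, D, hDS, hCD⟩
  omega

end

theorem stmt_3_general {α : Type} [DecidableEq α] (S' : Finset (Clause α))
    (hmin : MinimalUnsat (↑S' : Set (Clause α))) (n : ℕ) (hn : S'.card = n)
    (C D : Clause α) (hC : C ∈ S') (hD : D ∈ S') (hne : C ≠ D) :
    ∃ m ≤ 2 * n - 2, AltPathFromTo (↑S' : Set (Clause α)) C D m := by
  obtain ⟨m, hm⟩ := hmin.relevanceConnected C hC D hD
  obtain ⟨Cs, ps, hshort, hhead, hlast⟩ := hm.exists_isShortestAltPath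
  exact ⟨Cs.length, hn ▸ hshort.length_le hhead hlast hne, Cs, ps, hshort.1, hhead, hlast, rfl⟩

/-- If `S'` is a minimal unsatisfiable subset of `S` with `|S'| = n`, then any two
distinct clauses of `S'` are joined by an alternating path in `S'` of length at
most `2n − 2`. -/
theorem stmt_3 {α : Type} [DecidableEq α] (S : Set (Clause α))
    (S' : Finset (Clause α)) (hsub : ↑S' ⊆ S)
    (hmin : MinimalUnsat (↑S' : Set (Clause α))) (n : ℕ) (hn : S'.card = n)
    (C D : Clause α) (hC : C ∈ S') (hD : D ∈ S') (hne : C ≠ D) :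
    ∃ m ≤ 2 * n - 2, AltPathFromTo (↑S' : Set (Clause α)) C D m :=
  stmt_3_general S' hmin n hn C D hC hD hne
end

section
/- Let S be a set of propositional clauses such that every clause of S has at most k literals (k ≥ 1) and, for every literal L, at most b clauses of S contain a literal complementary to L. Let S' ⊆ S be finite. Then for every n ≥ 2, the number of clauses of S that occur as the last clause of some alternating path in S of length n whose first clause lies in S' is at most |S'|·b^{n−1}·k·(k−1)^{n−2}; consequently, for n ≥ 2, |R_{n,S}(S')| ≤ |S'|·(1 + Σ_{i=2}^{n} b^{i−1}·k·(k−1)^{i−2}). -/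
/-! Follow an alternating path from `S'` clause by clause and record, after each link, the
clause reached together with the literal through which it was entered. The next link leaves
through another literal of that clause (at most `k - 1` choices; `k` from the first clause)
into one of the at most `b` clauses containing its complement, so the number of such states
grows by a factor of at most `(k - 1) * b` per link. The bound on `R_{n,S}(S')` sums this over
the lengths `2, …, n`, the paths of length one contributing `S'` itself. -/

namespace IsAltPath

variable {α : Type} [DecidableEq α] {S : Set (Clause α)} {Cs : List (Clause α)}
  {ps : List (Lit α × Lit α)}

theorem length_eq_s11 (h : IsAltPath S Cs ps) : Cs.length = ps.length + 1 := h.2.1.symm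

theorem mem (h : IsAltPath S Cs ps) {C : Clause α} (hC : C ∈ Cs) : C ∈ S := h.2.2.1 C hC

theorem fst_mem (h : IsAltPath S Cs ps) (i : ℕ) (hi : i < ps.length) :
    ps[i].1 ∈ Cs[i]'(by have := h.length_eq_s11; omega) := by
  have := (h.2.2.2.1 i hi).1
  rwa [List.getD_eq_getElem _ _ (by have := h.length_eq_s11; omega)] at this

theorem snd_mem (h : IsAltPath S Cs ps) (i : ℕ) (hi : i < ps.length) :
    ps[i].2 ∈ Cs[i + 1]'(by have := h.length_eq_s11; omega) := by
  have := (h.2.2.2.1 i hi).2.1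
  rwa [List.getD_eq_getElem _ _ (by have := h.length_eq_s11; omega)] at this

theorem snd_eq_compl (h : IsAltPath S Cs ps) (i : ℕ) (hi : i < ps.length) :
    ps[i].2 = ps[i].1.compl :=
  (h.2.2.2.1 i hi).2.2

theorem fst_ne_snd (h : IsAltPath S Cs ps) (i : ℕ) (hi : i + 1 < ps.length) :
    ps[i + 1].1 ≠ ps[i].2 :=
  h.2.2.2.2 i hi

theorem dropLast (h : IsAltPath S Cs ps) (hps : ps ≠ []) :
    IsAltPath S Cs.dropLast ps.dropLast := by
  have hlen := h.length_eq_s11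
  have hpos := List.length_pos_iff.2 hps
  refine ⟨?_, ?_, fun C hC => h.mem (List.dropLast_subset _ hC), fun i hi => ?_, fun i hi => ?_⟩
  · rw [← List.length_pos_iff, List.length_dropLast]; omega
  · simp only [List.length_dropLast]; omega
  · simp only [List.length_dropLast] at hi
    have hCi : i + 1 < Cs.dropLast.length := by simp only [List.length_dropLast]; omega
    simp only [List.get_eq_getElem, List.getElem_dropLast,
      List.getD_eq_getElem _ _ hCi, List.getD_eq_getElem _ _ (Nat.lt_of_succ_lt hCi)]
    exact ⟨h.fst_mem i (by omega), h.snd_mem i (by omega), h.snd_eq_compl i (by omega)⟩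
  · simp only [List.length_dropLast] at hi
    simpa only [List.get_eq_getElem, List.getElem_dropLast] using h.fst_ne_snd i (by omega)

end IsAltPath

namespace AltPathFromTo

variable {α : Type} [DecidableEq α]

theorem length_pos {S : Set (Clause α)} {D C : Clause α} {n : ℕ}
    (h : AltPathFromTo S D C n) : 0 < n := by
  obtain ⟨Cs, ps, hpath, -, -, rfl⟩ := h
  exact List.length_pos_iff.2 hpath.1

theorem eq_of_length_one {S : Set (Clause α)} {D C : Clause α}
    (h : AltPathFromTo S D C 1) : D = C := by
  obtain ⟨Cs, ps, -, hhead, hlast, hC⟩ := h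
  obtain ⟨E, rfl⟩ := List.length_eq_one_iff.1 hC
  simp_all

end AltPathFromTo

theorem Set.encard_biUnion_le_mul {ι β : Type*} (t : Set ι) (s : ι → Set β) {c : ℕ∞}
    (h : ∀ i ∈ t, (s i).encard ≤ c) : (⋃ i ∈ t, s i).encard ≤ t.encard * c := by
  rcases t.finite_or_infinite with ht | ht
  · calc (⋃ i ∈ t, s i).encard = (⋃ i ∈ ht.toFinset, s i).encard := by simp
      _ ≤ ∑ i ∈ ht.toFinset, (s i).encard := ht.toFinset.set_encard_biUnion_le s
      _ ≤ ∑ _i ∈ ht.toFinset, c := Finset.sum_le_sum fun i hi => h i (ht.mem_toFinset.1 hi)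
      _ = t.encard * c := by
        rw [Finset.sum_const, nsmul_eq_mul, ht.encard_eq_coe_toFinset_card]
  · rcases eq_or_ne c 0 with rfl | hc
    · simp_all
    · rw [ht.encard_eq, ENat.top_mul hc]
      exact le_top

namespace AltPath

variable {α : Type}

def linkEnds (S : Set (Clause α)) (L : Lit α) : Set (Clause α × Lit α) :=
  (fun C => (C, L.compl)) '' {C ∈ S | L.compl ∈ C}

theorem encard_linkEnds_le {S : Set (Clause α)} {b : ℕ}
    (hb : ∀ L : Lit α, {C ∈ S | L.compl ∈ C}.encard ≤ b) (L : Lit α) :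
    (linkEnds S L).encard ≤ b :=
  (Set.encard_image_le _ _).trans (hb L)

variable [DecidableEq α]

/-- The pairs (last clause, literal through which it is entered) of the alternating paths
starting in `T`; note the shift: these paths have `n + 2` clauses. -/
def endStates (S T : Set (Clause α)) (n : ℕ) : Set (Clause α × Lit α) :=
  {q | ∃ Cs ps, IsAltPath S Cs ps ∧ ∃ (_ : Cs.length = n + 2) (_ : ps.length = n + 1),
    Cs[0] ∈ T ∧ (Cs[n + 1], ps[n].2) = q}

theorem mem_endStates {S T : Set (Clause α)} {n : ℕ} {q : Clause α × Lit α}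
    (hq : q ∈ endStates S T n) : q.1 ∈ S ∧ q.2 ∈ q.1 := by
  obtain ⟨Cs, ps, h, hC, hp, -, rfl⟩ := hq
  exact ⟨h.mem (List.getElem_mem _), h.snd_mem n (by omega)⟩

theorem endStates_zero_subset (S T : Set (Clause α)) :
    endStates S T 0 ⊆ ⋃ D ∈ T, ⋃ L ∈ (D : Set (Lit α)), linkEnds S L := by
  rintro _ ⟨Cs, ps, h, hC, hp, hT, rfl⟩
  refine Set.mem_biUnion hT (Set.mem_biUnion (h.fst_mem 0 (by omega)) ?_)
  rw [h.snd_eq_compl 0 (by omega)]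
  exact ⟨Cs[1], ⟨h.mem (List.getElem_mem _), h.snd_eq_compl 0 (by omega) ▸ h.snd_mem 0 _⟩, rfl⟩

theorem endStates_succ_subset (S T : Set (Clause α)) (n : ℕ) :
    endStates S T (n + 1) ⊆
      ⋃ q ∈ endStates S T n, ⋃ L ∈ (q.1.erase q.2 : Set (Lit α)), linkEnds S L := by
  rintro _ ⟨Cs, ps, h, hC, hp, hT, rfl⟩
  have hprefix : (Cs[n + 1], ps[n].2) ∈ endStates S T n :=
    ⟨Cs.dropLast, ps.dropLast, h.dropLast (by rintro rfl; simp at hp),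
      by simp [hC], by simp [hp], by simpa [List.getElem_dropLast] using hT,
      by simp [List.getElem_dropLast]⟩
  refine Set.mem_biUnion hprefix (Set.mem_biUnion (Finset.mem_coe.2 (Finset.mem_erase.2
    ⟨h.fst_ne_snd n (by omega), h.fst_mem (n + 1) (by omega)⟩)) ?_)
  rw [h.snd_eq_compl (n + 1) (by omega)]
  exact ⟨Cs[n + 2], ⟨h.mem (List.getElem_mem _),
    h.snd_eq_compl (n + 1) (by omega) ▸ h.snd_mem (n + 1) _⟩, rfl⟩

theorem encard_endStates_le {S T : Set (Clause α)} (hT : T ⊆ S) {k b : ℕ}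
    (hsize : ∀ C ∈ S, C.card ≤ k) (hb : ∀ L : Lit α, {C ∈ S | L.compl ∈ C}.encard ≤ b)
    (n : ℕ) : (endStates S T n).encard ≤ T.encard * (k * b : ℕ) * ((k - 1) * b : ℕ) ^ n := by
  induction n with
  | zero =>
    rw [pow_zero, mul_one]
    refine (Set.encard_mono (endStates_zero_subset S T)).trans
      (Set.encard_biUnion_le_mul _ _ fun D hD => ?_)
    refine (Set.encard_biUnion_le_mul _ _ fun L _ => encard_linkEnds_le hb L).trans ?_
    rw [Set.encard_coe_eq_coe_finsetCard, Nat.cast_mul]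
    gcongr
    exact hsize D (hT hD)
  | succ n ih =>
    refine (Set.encard_mono (endStates_succ_subset S T n)).trans
      ((Set.encard_biUnion_le_mul (c := ((k - 1) * b : ℕ)) _ _ fun q hq => ?_).trans ?_)
    · refine (Set.encard_biUnion_le_mul _ _ fun L _ => encard_linkEnds_le hb L).trans ?_
      obtain ⟨hqS, hq⟩ := mem_endStates hq
      rw [Set.encard_coe_eq_coe_finsetCard, Finset.card_erase_of_mem hq, Nat.cast_mul]
      gcongr
      exact hsize _ hqS
    · rw [pow_succ, ← mul_assoc]
      gcongr

def pathEnds (S T : Set (Clause α)) (n : ℕ) : Set (Clause α) :=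
  {C | C ∈ S ∧ ∃ D ∈ T, AltPathFromTo S D C n}

theorem pathEnds_subset_image_endStates (S T : Set (Clause α)) (n : ℕ) :
    pathEnds S T (n + 2) ⊆ Prod.fst '' endStates S T n := by
  rintro C ⟨-, D, hD, Cs, ps, h, hhead, hlast, hC⟩
  have hp : ps.length = n + 1 := by have := h.length_eq_s11; omega
  refine ⟨(C, ps[n].2), ⟨Cs, ps, h, hC, hp, ?_, ?_⟩, rfl⟩
  · rw [List.head?_eq_getElem?, List.getElem?_eq_getElem (by omega), Option.some_inj] at hhead
    exact hhead ▸ hD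
  · rw [List.getLast?_eq_getElem?, List.getElem?_eq_getElem (by omega), Option.some_inj] at hlast
    simp only [hC] at hlast
    subst hlast
    rfl

theorem encard_pathEnds_le {S : Set (Clause α)} {S' : Finset (Clause α)} (hsub : ↑S' ⊆ S)
    {k b : ℕ} (hsize : ∀ C ∈ S, C.card ≤ k)
    (hb : ∀ L : Lit α, {C ∈ S | L.compl ∈ C}.encard ≤ b) {n : ℕ} (hn : 2 ≤ n) :
    (pathEnds S S' n).encard ≤ ((S'.card * b ^ (n - 1) * k * (k - 1) ^ (n - 2) : ℕ) : ℕ∞) := by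
  obtain ⟨n, rfl⟩ := Nat.exists_eq_add_of_le' hn
  calc (pathEnds S S' (n + 2)).encard ≤ (endStates S S' n).encard :=
        (Set.encard_mono (pathEnds_subset_image_endStates S S' n)).trans (Set.encard_image_le _ _)
    _ ≤ _ := encard_endStates_le hsub hsize hb n
    _ = _ := by
      rw [Set.encard_coe_eq_coe_finsetCard, Nat.add_sub_cancel, Nat.add_sub_assoc one_le_two]
      push_cast
      ring

theorem exists_altPathFromTo_of_relDistFrom_le {S T : Set (Clause α)} {C : Clause α} {n : ℕ}
    (h : relDistFrom S T C ≤ n) : ∃ D ∈ T, ∃ m ≤ n, AltPathFromTo S D C m := by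
  have hlt : relDistFrom S T C < (n + 1 : ℕ) := h.trans_lt (by exact_mod_cast n.lt_succ_self)
  obtain ⟨D, hlt⟩ := iInf_lt_iff.1 hlt
  obtain ⟨hD, hlt⟩ := iInf_lt_iff.1 hlt
  obtain ⟨m, hlt⟩ := iInf_lt_iff.1 hlt
  obtain ⟨hm, hlt⟩ := iInf_lt_iff.1 hlt
  exact ⟨D, hD, m, Nat.lt_succ_iff.1 (by exact_mod_cast hlt), hm⟩

theorem relSet_subset (S T : Set (Clause α)) (n : ℕ) :
    RelSet n S T ⊆ T ∪ ⋃ i ∈ Finset.Icc 2 n, pathEnds S T i := by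
  rintro C ⟨hC, hdist⟩
  obtain ⟨D, hD, m, hmn, hpath⟩ := exists_altPathFromTo_of_relDistFrom_le hdist
  rcases (Nat.one_le_iff_ne_zero.2 hpath.length_pos.ne').eq_or_lt with rfl | hm
  · exact Or.inl (hpath.eq_of_length_one ▸ hD)
  · exact Or.inr (Set.mem_biUnion (Finset.mem_Icc.2 ⟨hm, hmn⟩) ⟨hC, D, hD, hpath⟩)

theorem encard_relSet_le {S : Set (Clause α)} {S' : Finset (Clause α)} (hsub : ↑S' ⊆ S)
    {k b : ℕ} (hsize : ∀ C ∈ S, C.card ≤ k)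
    (hb : ∀ L : Lit α, {C ∈ S | L.compl ∈ C}.encard ≤ b) (n : ℕ) :
    (RelSet n S S').encard ≤
      ((S'.card * (1 + ∑ i ∈ Finset.Icc 2 n, b ^ (i - 1) * k * (k - 1) ^ (i - 2)) : ℕ) : ℕ∞) := by
  calc (RelSet n S S').encard
      ≤ (S' : Set (Clause α)).encard + (⋃ i ∈ Finset.Icc 2 n, pathEnds S S' i).encard :=
        (Set.encard_mono (relSet_subset S S' n)).trans (Set.encard_union_le _ _)
    _ ≤ S'.card + ∑ i ∈ Finset.Icc 2 n,
          ((S'.card * b ^ (i - 1) * k * (k - 1) ^ (i - 2) : ℕ) : ℕ∞) := by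
        rw [Set.encard_coe_eq_coe_finsetCard]
        exact add_le_add_right ((Finset.set_encard_biUnion_le _ _).trans (Finset.sum_le_sum
          fun i hi => encard_pathEnds_le hsub hsize hb (Finset.mem_Icc.1 hi).1)) _
    _ = _ := by
      push_cast
      rw [mul_add, mul_one, Finset.mul_sum]
      simp only [mul_assoc]

end AltPath

theorem stmt_11_general {α : Type} [DecidableEq α] (S : Set (Clause α))
    (S' : Finset (Clause α)) (hsub : ↑S' ⊆ S) (k b : ℕ)
    (hsize : ∀ C ∈ S, C.card ≤ k)
    (hb : ∀ L : Lit α, {C ∈ S | Lit.compl L ∈ C}.encard ≤ (b : ℕ∞)) :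
    ∀ n, 2 ≤ n →
      {C | C ∈ S ∧ ∃ D ∈ S', AltPathFromTo S D C n}.encard
          ≤ ((S'.card * b ^ (n - 1) * k * (k - 1) ^ (n - 2) : ℕ) : ℕ∞) ∧
      (RelSet n S ↑S').encard
          ≤ ((S'.card *
              (1 + ∑ i ∈ Finset.Icc 2 n, b ^ (i - 1) * k * (k - 1) ^ (i - 2)) : ℕ)
              : ℕ∞) :=
  fun _ hn =>
    ⟨AltPath.encard_pathEnds_le hsub hsize hb hn, AltPath.encard_relSet_le hsub hsize hb _⟩

/-- Branching factor bound: if every clause of `S` has at most `k` literals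
(`k ≥ 1`) and every literal has at most `b` clauses of `S` containing a
complementary literal, and `S' ⊆ S` is finite, then for every `n ≥ 2` the number
of clauses of `S` occurring as the last clause of an alternating path in `S` of
length `n` whose first clause lies in `S'` is at most
`|S'|·b^{n−1}·k·(k−1)^{n−2}`; consequently
`|R_{n,S}(S')| ≤ |S'|·(1 + Σ_{i=2}^{n} b^{i−1}·k·(k−1)^{i−2})`. -/
theorem stmt_11 {α : Type} [DecidableEq α] (S : Set (Clause α))
    (S' : Finset (Clause α)) (hsub : ↑S' ⊆ S) (k b : ℕ) (hk : 1 ≤ k)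
    (hsize : ∀ C ∈ S, C.card ≤ k)
    (hb : ∀ L : Lit α, {C ∈ S | Lit.compl L ∈ C}.encard ≤ (b : ℕ∞)) :
    ∀ n, 2 ≤ n →
      {C | C ∈ S ∧ ∃ D ∈ S', AltPathFromTo S D C n}.encard
          ≤ ((S'.card * b ^ (n - 1) * k * (k - 1) ^ (n - 2) : ℕ) : ℕ∞) ∧
      (RelSet n S ↑S').encard
          ≤ ((S'.card *
              (1 + ∑ i ∈ Finset.Icc 2 n, b ^ (i - 1) * k * (k - 1) ^ (i - 2)) : ℕ)
              : ℕ∞) :=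
  stmt_11_general S S' hsub k b hsize hb
end

section
/- Let S be a set of propositional clauses and U a support set for S. If the set of all clauses of S that are joined by an alternating path in S to some clause of U is satisfiable, then S is satisfiable. -/
namespace Lit

variable {α : Type}

@[simp]
lemma compl_compl_s12 (L : Lit α) : L.compl.compl = L := by
  simp [compl]

lemma eq_compl_of_satLit_of_not_satLit {v : α → Bool} {K L : Lit α} (hKL : K.1 = L.1)
    (hL : SatLit v L) (hK : ¬ SatLit v K) : K = L.compl := by
  obtain ⟨a, s⟩ := K
  obtain ⟨b, t⟩ := L
  simp only [SatLit] at hKL hL hK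
  subst hKL hL
  cases s <;> cases h : v a <;> simp_all [compl]

lemma not_satLit_compl {v : α → Bool} {L : Lit α} (hL : SatLit v L) : ¬ SatLit v L.compl := by
  simp [SatLit, compl, hL.symm]

end Lit

section Satisfiability

variable {α : Type}

lemma Satisfiable.mono {S T : Set (Clause α)} (hTS : T ⊆ S) (hS : Satisfiable S) :
    Satisfiable T :=
  hS.imp fun _ hv C hC => hv C (hTS hC)

lemma isClosed_setOf_satClause (C : Clause α) : IsClosed {v : α → Bool | SatClause v C} := by
  have hC : {v : α → Bool | SatClause v C} = ⋃ L ∈ C, {v | v L.1 = L.2} := by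
    ext v
    simp [SatClause, SatLit]
  rw [hC]
  exact isClosed_biUnion_finset fun L _ => isClosed_eq (continuous_apply L.1) continuous_const

theorem satisfiable_of_forall_finite {S : Set (Clause α)}
    (h : ∀ T ⊆ S, T.Finite → Satisfiable T) : Satisfiable S := by
  obtain ⟨v, -, hv⟩ := isCompact_univ.inter_iInter_nonempty
    (fun C : S => {v | SatClause v C.1}) (fun C => isClosed_setOf_satClause C.1) fun F => by
      obtain ⟨v, hv⟩ := h (Subtype.val '' (F : Set S)) (Subtype.coe_image_subset S _)
        (F.finite_toSet.image _)
      exact ⟨v, trivial, Set.mem_iInter₂.2 fun C hC => hv C ⟨C, hC, rfl⟩⟩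
  exact ⟨v, fun C hC => Set.mem_iInter.1 hv ⟨C, hC⟩⟩

theorem exists_minimalUnsat_subset {M : Set (Clause α)} (hM : M.Finite)
    (h : ¬ Satisfiable M) : ∃ M' ⊆ M, MinimalUnsat M' := by
  obtain ⟨M', ⟨hM'M, hM'⟩, hmin⟩ :=
    (hM.finite_subsets.subset fun T (hT : T ⊆ M ∧ ¬ Satisfiable T) => hT.1).exists_minimal
      ⟨M, subset_rfl, h⟩
  exact ⟨M', hM'M, hM', fun T hT =>
    by_contra fun hTu => hT.2 (hmin ⟨hT.1.trans hM'M, hTu⟩ hT.1)⟩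

end Satisfiability

section AltPath

variable {α : Type} [DecidableEq α]

lemma AltPathFromTo.mono {S T : Set (Clause α)} (hST : S ⊆ T) {C D : Clause α} {n : ℕ}
    (h : AltPathFromTo S C D n) : AltPathFromTo T C D n := by
  obtain ⟨Cs, ps, ⟨hne, hlen, hmem, hlink, halt⟩, hhead, hlast, hn⟩ := h
  exact ⟨Cs, ps, ⟨hne, hlen, fun C hC => hST (hmem C hC), hlink, halt⟩, hhead, hlast, hn⟩

lemma isAltPath_singleton {S : Set (Clause α)} {C : Clause α} (hC : C ∈ S) :
    IsAltPath S [C] [] :=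
  ⟨List.cons_ne_nil _ _, rfl, by simpa using hC, fun _ h => absurd h (Nat.not_lt_zero _),
    fun _ h => absurd h (Nat.not_lt_zero _)⟩

lemma IsAltPath.cons {S : Set (Clause α)} {Cs : List (Clause α)} {ps : List (Lit α × Lit α)}
    (h : IsAltPath S Cs ps) {E G : Clause α} {L : Lit α} (hE : Cs.head? = some E) (hL : L ∈ E)
    (hG : G ∈ S) (hGL : L.compl ∈ G) (hexit : ∀ p ∈ ps.head?, p.1 ≠ L) :
    IsAltPath S (G :: Cs) ((L.compl, L) :: ps) := by
  obtain ⟨hne, hlen, hmem, hlink, halt⟩ := h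
  obtain ⟨C, Cs, rfl⟩ := List.exists_cons_of_ne_nil hne
  obtain rfl : C = E := by simpa using hE
  refine ⟨List.cons_ne_nil _ _, by simp [hlen], List.forall_mem_cons.2 ⟨hG, hmem⟩, ?_, ?_⟩
  · rintro (_ | i) hi
    · exact ⟨hGL, hL, by simp⟩
    · simpa using hlink i (by simpa using hi)
  · rintro (_ | i) hi
    · cases ps with
      | nil => simp at hi
      | cons p ps => simpa using hexit p rfl
    · simpa using halt i (by simpa using hi)

end AltPath

/-- `AltReach M D E e`: an alternating path in `M` leads from `E` to `D` and leaves `E` by the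
literal `e` (`none` for the one-clause path). -/
inductive AltReach {α : Type} (M : Set (Clause α)) (D : Clause α) : Clause α → Option (Lit α) → Prop
  | refl : D ∈ M → AltReach M D D none
  | cons {E G : Clause α} {e : Option (Lit α)} {L : Lit α} :
      AltReach M D E e → L ∈ E → L ∉ e → G ∈ M → L.compl ∈ G → AltReach M D G (some L.compl)

namespace AltReach

variable {α : Type} {M : Set (Clause α)} {D E : Clause α} {e : Option (Lit α)}

lemma mem (h : AltReach M D E e) : E ∈ M := by
  cases h with
  | refl hD => exact hD
  | cons _ _ _ hG _ => exact hG

theorem satisfiable_of_satClause_of_satSet_diff {u v : α → Bool}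
    (hu : ∀ E e, AltReach M D E e → SatClause u E) (hv : SatSet v (M \ {D})) : Satisfiable M := by
  classical
  let good (E : Clause α) (e : Option (Lit α)) : Prop := AltReach M D E e ∧ ∀ m ∈ e, ¬ SatLit u m
  let X : Set α := {a | ∃ E e L, good E e ∧ L ∈ E ∧ SatLit u L ∧ L.1 = a}
  let w : α → Bool := X.piecewise u v
  have sat_of_good : ∀ E e, good E e → SatClause w E := by
    rintro E e ⟨hE, he⟩
    obtain ⟨L, hLE, hL⟩ := hu E e hE
    refine ⟨L, hLE, ?_⟩
    have hX : L.1 ∈ X := ⟨E, e, L, ⟨hE, he⟩, hLE, hL, rfl⟩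
    simpa [SatLit, w, hX] using hL
  have good_cons : ∀ E e (L : Lit α) G, good E e → L ∈ E → SatLit u L → G ∈ M → L.compl ∈ G →
      good G (some L.compl) := by
    rintro E e L G ⟨hE, he⟩ hLE hL hG hGL
    refine ⟨hE.cons hLE (fun hLe => he L hLe hL) hG hGL, ?_⟩
    rintro m ⟨⟩
    exact Lit.not_satLit_compl hL
  refine ⟨w, fun G hG => ?_⟩
  by_cases hGD : G = D
  · subst hGD
    exact sat_of_good G none ⟨.refl hG, by simp⟩
  obtain ⟨K, hKG, hK⟩ := hv G ⟨hG, hGD⟩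
  by_cases hX : K.1 ∈ X
  · obtain ⟨E, e, L, hgood, hLE, hL, hKL⟩ := id hX
    by_cases huK : SatLit u K
    · exact ⟨K, hKG, by simpa [SatLit, w, hX] using huK⟩
    · rw [Lit.eq_compl_of_satLit_of_not_satLit hKL.symm hL huK] at hKG
      exact sat_of_good G _ (good_cons E e L G hgood hLE hL hG hKG)
  · exact ⟨K, hKG, by simpa [SatLit, w, hX] using hK⟩

variable [DecidableEq α]

lemma exists_isAltPath (h : AltReach M D E e) :
    ∃ Cs ps, IsAltPath M Cs ps ∧ Cs.head? = some E ∧ Cs.getLast? = some D ∧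
      ps.head?.map Prod.fst = e := by
  induction h with
  | refl hD => exact ⟨[D], [], isAltPath_singleton hD, rfl, rfl, rfl⟩
  | @cons E G e L _ hL hLe hG hGL ih =>
    obtain ⟨Cs, ps, hpath, hhead, hlast, hexit⟩ := ih
    refine ⟨G :: Cs, (L.compl, L) :: ps, hpath.cons hhead hL hG hGL ?_, rfl, ?_, rfl⟩
    · rintro p hp rfl
      exact hLe (by simp [← hexit, Option.mem_def.1 hp])
    · cases Cs with
      | nil => simp at hhead
      | cons C Cs => rwa [List.getLast?_cons_cons]

lemma altPathFromTo (h : AltReach M D E e) : ∃ n, AltPathFromTo M E D n := by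
  obtain ⟨Cs, ps, hpath, hhead, hlast, -⟩ := h.exists_isAltPath
  exact ⟨Cs.length, Cs, ps, hpath, hhead, hlast, rfl⟩

end AltReach

theorem MinimalUnsat.relevanceConnected_s12 {α : Type} [DecidableEq α] {M : Set (Clause α)}
    (hM : MinimalUnsat M) : RelevanceConnected M := by
  intro E hE D hD
  by_contra hED
  have hsub : {G | ∃ e, AltReach M D G e} ⊂ M :=
    ⟨fun G ⟨_, hG⟩ => hG.mem, fun hMsub => hED ((hMsub hE).elim fun _ h => h.altPathFromTo)⟩
  obtain ⟨u, hu⟩ := hM.2 _ hsub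
  obtain ⟨v, hv⟩ := hM.2 _ (Set.sdiff_singleton_ssubset.2 hD)
  exact hM.1 (AltReach.satisfiable_of_satClause_of_satSet_diff (fun G e hG => hu G ⟨e, hG⟩) hv)

/-- If `U` is a support set for `S` and the set of all clauses of `S` joined by an
alternating path in `S` to some clause of `U` is satisfiable, then `S` is
satisfiable. -/
theorem stmt_12 {α : Type} [DecidableEq α] (S U : Set (Clause α))
    (hU : IsSupport S U)
    (h : Satisfiable {C ∈ S | ∃ D ∈ U, ∃ n, AltPathFromTo S C D n}) :
    Satisfiable S := by
  by_contra hS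
  obtain ⟨M, hMS, hMfin, hM⟩ : ∃ M ⊆ S, M.Finite ∧ ¬ Satisfiable M := by
    by_contra! hfin
    exact hS (satisfiable_of_forall_finite hfin)
  obtain ⟨M', hM'M, hmin⟩ := exists_minimalUnsat_subset hMfin hM
  have hM'S : M' ⊆ S := hM'M.trans hMS
  obtain ⟨D, hDM', hDU⟩ := hU.2 M' hM'S hmin.1
  have hrel : M' ⊆ {C ∈ S | ∃ D ∈ U, ∃ n, AltPathFromTo S C D n} := fun E hE =>
    ⟨hM'S hE, D, hDU, (hmin.relevanceConnected_s12 E hE D hDM').imp fun _ hn => hn.mono hM'S⟩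
  exact hmin.1 (h.mono hrel)
end
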